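/- arXiv:2509.10633 — 7 statements merged into one kernel-verified Lean document; each statement's English description precedes it below -/
import Mathlib

section
/- Let k be a field, σ : k → k a field automorphism, M a k-vector space, and F : M → M a σ-semilinear map. Then any finite family of nonzero fixed points of F which is linearly independent over the fixed field k^σ is linearly independent over k. -/
/-- The fixed subfield `k^σ = {x ∈ k : σ x = x}` of a field endomorphism `σ : k → k`. -/
def RingHom.fixedSubfield {k : Type*} [Field k] (σ : k →+* k) : Subfield k where
  carrier := {x | σ x = x}
  mul_mem' ha hb := by simp_all [map_mul]
  one_mem' := by simp
  add_mem' ha hb := by simp_all [map_add]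
  zero_mem' := by simp
  neg_mem' ha := by simp_all [map_neg]
  inv_mem' x hx := by
    simp only [Set.mem_setOf_eq] at *
    rw [map_inv₀, hx]

/-- Let `k` be a field, `σ : k → k` a field automorphism, `M` a `k`-vector space and
`F : M → M` a `σ`-semilinear map.  Any finite family of nonzero fixed points of `F` which is
linearly independent over the fixed field `k^σ` is linearly independent over `k`. -/
theorem linearIndependent_of_fixedPoints_linearIndependent_fixedSubfield
    {k M : Type*} [Field k] [AddCommGroup M] [Module k M]
    (σ : k →+* k) (hσ : Function.Bijective σ) (F : M →ₛₗ[σ] M)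
    {ι : Type*} [Finite ι] (v : ι → M)
    (hv0 : ∀ i, v i ≠ 0) (hvF : ∀ i, F (v i) = v i)
    (hli : LinearIndependent σ.fixedSubfield v) :
    LinearIndependent k v := by
  classical
  rw [linearIndependent_iff] at hli ⊢
  by_contra h
  push_neg at h
  obtain ⟨l₀, hl₀, hl₀ne⟩ := h
  -- minimal support cardinality among nonzero relations
  set P : ℕ → Prop := fun n => ∃ l : ι →₀ k,
    Finsupp.linearCombination k v l = 0 ∧ l ≠ 0 ∧ l.support.card = n with hP
  have hPex : ∃ n, P n := ⟨l₀.support.card, l₀, hl₀, hl₀ne, rfl⟩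
  obtain ⟨l, hl, hlne, hlcard⟩ := Nat.find_spec hPex
  have hmin : ∀ l' : ι →₀ k, Finsupp.linearCombination k v l' = 0 →
      l'.support.card < Nat.find hPex → l' = 0 := by
    intro l' h1 h2
    by_contra h3
    exact Nat.find_min hPex h2 ⟨l', h1, h3, rfl⟩
  obtain ⟨i₀, hi₀⟩ := Finsupp.support_nonempty_iff.mpr hlne
  have hli₀ : l i₀ ≠ 0 := Finsupp.mem_support_iff.mp hi₀
  -- normalize
  set l₁ : ι →₀ k := (l i₀)⁻¹ • l with hl₁
  have hl₁i₀ : l₁ i₀ = 1 := by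
    simp [hl₁, Finsupp.smul_apply, inv_mul_cancel₀ hli₀]
  have hl₁supp : l₁.support = l.support := Finsupp.support_smul_eq (inv_ne_zero hli₀)
  have hl₁tot : Finsupp.linearCombination k v l₁ = 0 := by
    rw [hl₁, map_smul, hl, smul_zero]
  -- apply F to the relation
  have hσtot : Finsupp.linearCombination k v (l₁.mapRange σ (map_zero σ)) = 0 := by
    have := congrArg F hl₁tot
    rw [map_zero] at this
    rw [Finsupp.linearCombination_apply, Finsupp.sum, map_sum] at this
    rw [Finsupp.linearCombination_apply]
    rw [Finsupp.sum_mapRange_index (by simp)]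
    rw [← this]
    refine Finset.sum_congr rfl fun i _ => ?_
    rw [F.map_smulₛₗ, hvF]
  set m : ι →₀ k := l₁.mapRange σ (map_zero σ) - l₁ with hm
  have hmtot : Finsupp.linearCombination k v m = 0 := by
    rw [hm, map_sub, hσtot, hl₁tot, sub_zero]
  have hmi₀ : m i₀ = 0 := by
    simp [hm, hl₁i₀]
  have hmsupp : m.support ⊆ l₁.support \ {i₀} := by
    intro j hj
    rw [Finsupp.mem_support_iff] at hj
    rw [Finset.mem_sdiff, Finset.mem_singleton, Finsupp.mem_support_iff]
    constructor
    · intro hj0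
      apply hj
      simp [hm, hj0]
    · rintro rfl
      exact hj hmi₀
  have hm0 : m = 0 := by
    apply hmin _ hmtot
    calc m.support.card ≤ (l₁.support \ {i₀}).card := Finset.card_le_card hmsupp
      _ < l₁.support.card := Finset.card_lt_card (by
          rw [Finset.ssubset_iff_of_subset (Finset.sdiff_subset)]
          exact ⟨i₀, by rw [hl₁supp]; exact hi₀, by simp⟩)
      _ = Nat.find hPex := by rw [hl₁supp, hlcard]
  have hfix : ∀ i, σ (l₁ i) = l₁ i := by
    intro i
    have := congrFun (congrArg (DFunLike.coe) hm0) i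
    simpa [hm, sub_eq_zero] using this
  -- descend the relation to the fixed subfield
  set l₂ : ι →₀ σ.fixedSubfield :=
    ⟨l₁.support, fun i => ⟨l₁ i, hfix i⟩, by
      intro i
      rw [Finsupp.mem_support_iff]
      simp [Subtype.ext_iff]⟩ with hl₂
  have hl₂tot : Finsupp.linearCombination σ.fixedSubfield v l₂ = 0 := by
    rw [Finsupp.linearCombination_apply, Finsupp.sum]
    rw [Finsupp.linearCombination_apply, Finsupp.sum] at hl₁tot
    rw [← hl₁tot]
    refine Finset.sum_congr rfl fun i _ => ?_
    rw [Subfield.smul_def]; rfl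
  have := hli l₂ hl₂tot
  have : l₂ i₀ = 0 := by rw [this]; rfl
  rw [hl₂] at this
  simp only [Finsupp.coe_mk] at this
  rw [Subtype.ext_iff] at this
  simp [hl₁i₀] at this
end

section
/- Let k be a field, σ : k → k a field automorphism, M a k-vector space, and F : M → M a σ-semilinear map. Then the canonical k-linear map M^{F=id} ⊗_{k^σ} k → M induced by the inclusion M^{F=id} ⊆ M is injective. -/
/-- The set `M^{F = id}` of fixed points of a `σ`-semilinear map `F : M → M`,
as a `k^σ`-subspace of `M`. -/
def SemilinearMap.fixedPoints {k M : Type*} [Field k] [AddCommGroup M] [Module k M]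
    (σ : k →+* k) (F : M →ₛₗ[σ] M) : Submodule σ.fixedSubfield M where
  carrier := {m | F m = m}
  add_mem' ha hb := by simp_all [map_add]
  zero_mem' := by simp
  smul_mem' c m hm := by
    simp only [Set.mem_setOf_eq] at *
    rw [Submonoid.smul_def, map_smulₛₗ, hm, c.2]

/-- The canonical map `M^{F=id} ⊗_{k^σ} k → M`, sending `c ⊗ m` to `c • m`. -/
noncomputable def SemilinearMap.fixedPointsTensorMap {k M : Type*} [Field k] [AddCommGroup M]
    [Module k M] (σ : k →+* k) (F : M →ₛₗ[σ] M) :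
    (TensorProduct σ.fixedSubfield (SemilinearMap.fixedPoints σ F) k) →ₗ[σ.fixedSubfield] M :=
  TensorProduct.lift <| LinearMap.mk₂ σ.fixedSubfield
    (fun m c => c • (m : M))
    (fun m m' c => by simp [smul_add])
    (fun a m c => by
      simp only [SetLike.val_smul, Submonoid.smul_def]
      exact smul_comm _ _ _)
    (fun m c c' => by simp [add_smul])
    (fun a m c => by
      show ((a : k) * c) • (m : M) = (a : k) • (c • (m : M))
      rw [mul_smul])

section key
variable {k M : Type*} [Field k] [AddCommGroup M] [Module k M]
  (σ : k →+* k) (F : M →ₛₗ[σ] M)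

theorem key_li {ι : Type*} (v : ι → M) (hfix : ∀ i, F (v i) = v i)
    (hv : ∀ l : ι →₀ σ.fixedSubfield,
      (l.sum fun i a => (a : k) • v i) = 0 → l = 0) :
    LinearIndependent k v := by
  classical
  rw [linearIndependent_iff]
  suffices H : ∀ n (l : ι →₀ k), l.support.card = n →
      Finsupp.linearCombination k v l = 0 → l = 0 by
    exact fun l hl => H _ l rfl hl
  intro n
  induction n using Nat.strong_induction_on with
  | _ n ih =>
  intro l hcard hl
  by_contra h0
  obtain ⟨j, hj⟩ := Finsupp.ne_iff.mp h0
  rw [Finsupp.coe_zero, Pi.zero_apply] at hj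
  set l1 : ι →₀ k := (l j)⁻¹ • l with hl1def
  have hl1j : l1 j = 1 := by
    simp [hl1def, inv_mul_cancel₀ hj]
  have hsupp : l1.support = l.support := by
    exact Finsupp.support_smul_eq (inv_ne_zero hj)
  have hrel1 : Finsupp.linearCombination k v l1 = 0 := by
    rw [hl1def, map_smul, hl, smul_zero]
  have hrel2 : (l1.sum fun i a => σ a • v i) = 0 := by
    have h := congrArg F hrel1
    rw [map_zero, Finsupp.linearCombination_apply, Finsupp.sum, map_sum] at h
    rw [← h, Finsupp.sum]
    refine Finset.sum_congr rfl fun i _ => ?_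
    rw [F.map_smulₛₗ, hfix]
  set d : ι →₀ k := l1.mapRange σ σ.map_zero - l1 with hd
  have hdrel : Finsupp.linearCombination k v d = 0 := by
    have hmr : Finsupp.linearCombination k v (l1.mapRange σ σ.map_zero) = 0 := by
      rw [Finsupp.linearCombination_apply,
        Finsupp.sum_mapRange_index (fun i => zero_smul k (v i))]
      exact hrel2
    rw [hd, map_sub, hmr, hrel1, sub_self]
  have hdj : d j = 0 := by
    simp [hd, hl1j]
  have hdsupp : d.support ⊆ l.support.erase j := by
    intro i hi
    rw [Finset.mem_erase]
    constructor
    · rintro rfl; exact Finsupp.mem_support_iff.mp hi hdj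
    · rw [← hsupp]
      by_contra hns
      have : l1 i = 0 := Finsupp.notMem_support_iff.mp hns
      apply Finsupp.mem_support_iff.mp hi
      simp [hd, this]
  have hd0 : d = 0 := by
    refine ih d.support.card ?_ d rfl hdrel
    calc d.support.card ≤ (l.support.erase j).card := Finset.card_le_card hdsupp
      _ < l.support.card := Finset.card_erase_lt_of_mem (Finsupp.mem_support_iff.mpr hj)
      _ = n := hcard
  have hfixc : ∀ i, σ (l1 i) = l1 i := by
    intro i
    have := congrFun (congrArg (fun f : ι →₀ k => (f : ι → k)) hd0) i
    simpa [hd, sub_eq_zero] using this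
  set m : ι →₀ σ.fixedSubfield :=
    ⟨l1.support, fun i => ⟨l1 i, hfixc i⟩, by
      intro i
      rw [Finsupp.mem_support_iff]
      simp [Subtype.ext_iff]⟩ with hm
  have hmrel : (m.sum fun i a => (a : k) • v i) = 0 := by
    rw [← hrel1, Finsupp.linearCombination_apply, Finsupp.sum, Finsupp.sum]
    rfl
  have := hv m hmrel
  have hmj : m j = 0 := by rw [this]; rfl
  rw [hm] at hmj
  simp only [Finsupp.coe_mk] at hmj
  rw [Subtype.ext_iff] at hmj
  simp [hl1j] at hmj

end key

set_option maxHeartbeats 1000000 in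
/-- Let `k` be a field, `σ : k → k` a field automorphism, `M` a `k`-vector space and
`F : M → M` a `σ`-semilinear map.  The canonical map `M^{F=id} ⊗_{k^σ} k → M` induced by
the inclusion `M^{F=id} ⊆ M` is injective. -/
theorem fixedPointsTensorMap_injective
    {k M : Type*} [Field k] [AddCommGroup M] [Module k M]
    (σ : k →+* k) (hσ : Function.Bijective σ) (F : M →ₛₗ[σ] M) :
    Function.Injective (SemilinearMap.fixedPointsTensorMap σ F) := by
  classical
  set V := SemilinearMap.fixedPoints σ F with hV
  set b := Module.Basis.ofVectorSpace σ.fixedSubfield V with hb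
  have hli : LinearIndependent k
      (fun i : Module.Basis.ofVectorSpaceIndex σ.fixedSubfield V => ((b i : V) : M)) := by
    apply key_li σ F
    · intro i; exact (b i).2
    · intro l hl
      have h1 : ((Finsupp.linearCombination σ.fixedSubfield
          (fun i : Module.Basis.ofVectorSpaceIndex σ.fixedSubfield V => b i) l : V) : M) = 0 := by
        rw [Finsupp.linearCombination_apply, Finsupp.sum, AddSubmonoidClass.coe_finset_sum,
          ← hl, Finsupp.sum]
        refine Finset.sum_congr rfl fun i _ => ?_
        norm_cast
      have h2 : Finsupp.linearCombination σ.fixedSubfield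
          (fun i : Module.Basis.ofVectorSpaceIndex σ.fixedSubfield V => b i) l = 0 := by
        exact_mod_cast h1
      exact linearIndependent_iff.mp b.linearIndependent l h2
  have hsurj : ∀ x : TensorProduct σ.fixedSubfield V k,
      ∃ c : Module.Basis.ofVectorSpaceIndex σ.fixedSubfield V →₀ k,
        x = c.sum fun i ci => (b i : V) ⊗ₜ[σ.fixedSubfield] ci := by
    intro x
    induction x using TensorProduct.induction_on with
    | zero => exact ⟨0, by simp⟩
    | tmul v a =>
        refine ⟨(b.repr v).mapRange (fun t : σ.fixedSubfield => (t : k) * a) (by simp), ?_⟩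
        rw [Finsupp.sum_mapRange_index (by simp)]
        conv_lhs => rw [← b.linearCombination_repr v]
        rw [Finsupp.linearCombination_apply, Finsupp.sum, TensorProduct.sum_tmul]
        refine Finset.sum_congr rfl fun i _ => ?_
        rw [TensorProduct.smul_tmul]
        show _ = b i ⊗ₜ[σ.fixedSubfield] (((b.repr v) i : k) * a)
        rw [Submonoid.smul_def, smul_eq_mul]
    | add x y hx hy =>
        obtain ⟨c, rfl⟩ := hx
        obtain ⟨d, rfl⟩ := hy
        exact ⟨c + d, by
          rw [Finsupp.sum_add_index (by simp) (by simp [TensorProduct.tmul_add])]⟩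
  rw [injective_iff_map_eq_zero]
  intro x hx
  obtain ⟨c, rfl⟩ := hsurj x
  have hfx : SemilinearMap.fixedPointsTensorMap σ F
        (c.sum fun i ci => (b i : V) ⊗ₜ[σ.fixedSubfield] ci)
      = Finsupp.linearCombination k
        (fun i : Module.Basis.ofVectorSpaceIndex σ.fixedSubfield V => ((b i : V) : M)) c := by
    rw [Finsupp.linearCombination_apply, Finsupp.sum, Finsupp.sum, map_sum]
    refine Finset.sum_congr rfl fun i _ => ?_
    simp [SemilinearMap.fixedPointsTensorMap]
  rw [hfx] at hx
  have hc : c = 0 := linearIndependent_iff.mp hli c hx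
  rw [hc, Finsupp.sum_zero_index]
end

section
/- Let k be a field, σ : k → k a field automorphism, M a finite-dimensional k-vector space, and F : M → M a σ-semilinear map. Then M^{F=id} is a finite-dimensional k^σ-vector space and dim_{k^σ}(M^{F=id}) ≤ dim_k(M). -/
set_option maxHeartbeats 1000000
set_option synthInstance.maxHeartbeats 400000

lemma SemilinearMap.fixedPoints.li_lift {k M : Type*} [Field k] [AddCommGroup M] [Module k M]
    (σ : k →+* k) (F : M →ₛₗ[σ] M) {ι : Type*} (v : ι → SemilinearMap.fixedPoints σ F)
    (hv : LinearIndependent σ.fixedSubfield v) :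
    LinearIndependent k (fun i => (v i : M)) := by
  classical
  have hfixv : ∀ j, F (v j : M) = (v j : M) := fun j => (v j).2
  rw [linearIndependent_iff'] at hv ⊢
  intro s
  induction s using Finset.strongInductionOn with
  | _ s ih =>
    intro c hc i hi
    by_contra hne
    set c' : ι → k := fun j => (c i)⁻¹ * c j with hc'def
    have hc'0 : ∑ j ∈ s, c' j • (v j : M) = 0 := by
      simp only [hc'def, mul_smul, ← Finset.smul_sum, hc, smul_zero]
    have hc'i : c' i = 1 := inv_mul_cancel₀ hne
    have hF : ∑ j ∈ s, σ (c' j) • (v j : M) = 0 := by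
      have := congrArg F hc'0
      simpa only [map_sum, map_smulₛₗ, map_zero, hfixv] using this
    have hdiff : ∑ j ∈ s, (σ (c' j) - c' j) • (v j : M) = 0 := by
      simp only [sub_smul, Finset.sum_sub_distrib, hF, hc'0, sub_zero]
    have hdiff' : ∑ j ∈ s.erase i, (σ (c' j) - c' j) • (v j : M) = 0 := by
      have h1 : σ (c' i) - c' i = 0 := by rw [hc'i, map_one, sub_self]
      rw [← Finset.add_sum_erase s _ hi, h1, zero_smul, zero_add] at hdiff
      exact hdiff
    have hfix : ∀ j ∈ s, σ (c' j) = c' j := by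
      intro j hj
      rcases eq_or_ne j i with rfl | hji
      · rw [hc'i, map_one]
      · have := ih (s.erase i) (Finset.erase_ssubset hi) _ hdiff' j
          (Finset.mem_erase.mpr ⟨hji, hj⟩)
        exact sub_eq_zero.mp this
    set d : ι → σ.fixedSubfield := fun j => if h : j ∈ s then ⟨c' j, hfix j h⟩ else 0 with hd
    have hdsum : ∑ j ∈ s, d j • v j = 0 := by
      apply Subtype.ext
      push_cast
      rw [← hc'0]
      apply Finset.sum_congr rfl
      intro j hj
      rw [hd]
      simp only [dif_pos hj]
      rfl
    have := hv s d hdsum i hi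
    rw [hd] at this
    simp only [dif_pos hi] at this
    rw [Subtype.ext_iff] at this
    simp [hc'i] at this

/-- Let `k` be a field, `σ : k → k` a field automorphism, `M` a finite-dimensional
`k`-vector space and `F : M → M` a `σ`-semilinear map.  Then `M^{F=id}` is a
finite-dimensional `k^σ`-vector space, of dimension at most `dim_k M`. -/
theorem fixedPoints_finiteDimensional_and_finrank_le
    {k M : Type*} [Field k] [AddCommGroup M] [Module k M] [FiniteDimensional k M]
    (σ : k →+* k) (hσ : Function.Bijective σ) (F : M →ₛₗ[σ] M) :
    FiniteDimensional σ.fixedSubfield (SemilinearMap.fixedPoints σ F) ∧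
      Module.finrank σ.fixedSubfield (SemilinearMap.fixedPoints σ F) ≤
        Module.finrank k M := by
  have key : ∀ s : Finset (SemilinearMap.fixedPoints σ F),
      (LinearIndependent σ.fixedSubfield fun i : s => (i : SemilinearMap.fixedPoints σ F)) →
      s.card ≤ Module.finrank k M := by
    intro s hs
    have hli := SemilinearMap.fixedPoints.li_lift σ F _ hs
    have := hli.fintype_card_le_finrank
    simpa using this
  have hrank : Module.rank σ.fixedSubfield (SemilinearMap.fixedPoints σ F)
      ≤ (Module.finrank k M : Cardinal) := rank_le key
  have hfd : FiniteDimensional σ.fixedSubfield (SemilinearMap.fixedPoints σ F) :=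
    IsNoetherian.iff_fg.1 <| IsNoetherian.iff_rank_lt_aleph0.2 <|
      lt_of_le_of_lt hrank (Cardinal.nat_lt_aleph0 _)
  exact ⟨hfd, Module.finrank_le_of_rank_le hrank⟩
end

section
/- Let k be a field, σ : k → k a field automorphism, M a finite-dimensional k-vector space, and F : M → M a σ-semilinear map. Then there exist k-subspaces N and S of M, each stable under F, such that M is the internal direct sum N ⊕ S, the restriction of F to N is nilpotent, and the restriction of F to S is bijective. -/
open Function

/-- Let `k` be a field, `σ : k → k` a field automorphism, `M` a finite-dimensional
`k`-vector space and `F : M → M` a `σ`-semilinear map.  Then there are `F`-stable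
`k`-subspaces `N` and `S` of `M` with `M = N ⊕ S`, such that `F` is nilpotent on `N`
and `F` restricts to a bijection of `S`. -/
theorem exists_isCompl_nilpotent_bijective_of_semilinear
    {k M : Type*} [Field k] [AddCommGroup M] [Module k M] [FiniteDimensional k M]
    (σ : k →+* k) (hσ : Function.Bijective σ) (F : M →ₛₗ[σ] M) :
    ∃ N S : Submodule k M,
      IsCompl N S ∧
      (∀ x ∈ N, F x ∈ N) ∧ (∀ x ∈ S, F x ∈ S) ∧
      (∃ m : ℕ, ∀ x ∈ N, (⇑F)^[m] x = 0) ∧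
      Set.BijOn F S S := by
  -- basic facts about iterates
  have hadd : ∀ n (x y : M), (⇑F)^[n] (x + y) = (⇑F)^[n] x + (⇑F)^[n] y := by
    intro n
    induction n with
    | zero => simp
    | succ n ih =>
      intro x y
      simp only [iterate_succ_apply, map_add, ih]
  have hzero : ∀ n, (⇑F)^[n] (0 : M) = 0 := by
    intro n
    induction n with
    | zero => rfl
    | succ n ih => rw [iterate_succ_apply, map_zero, ih]
  have hneg : ∀ n (x : M), (⇑F)^[n] (-x) = -(⇑F)^[n] x := by
    intro n
    induction n with
    | zero => simp
    | succ n ih =>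
      intro x
      simp only [iterate_succ_apply, map_neg, ih]
  have hsub : ∀ n (x y : M), (⇑F)^[n] (x - y) = (⇑F)^[n] x - (⇑F)^[n] y := by
    intro n x y
    rw [sub_eq_add_neg, hadd, hneg, sub_eq_add_neg]
  have hsmul : ∀ n (c : k) (x : M), (⇑F)^[n] (c • x) = (⇑σ)^[n] c • (⇑F)^[n] x := by
    intro n
    induction n with
    | zero => simp
    | succ n ih =>
      intro c x
      simp only [iterate_succ_apply, F.map_smulₛₗ, ih]
  -- the kernels and ranges of iterates, as submodules
  set K : ℕ → Submodule k M := fun n =>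
    { carrier := {x | (⇑F)^[n] x = 0}
      add_mem' := by
        intro x y hx hy
        simp only [Set.mem_setOf_eq] at *
        rw [hadd, hx, hy, add_zero]
      zero_mem' := hzero n
      smul_mem' := by
        intro c x hx
        simp only [Set.mem_setOf_eq] at *
        rw [hsmul, hx, smul_zero] } with hKdef
  set R : ℕ → Submodule k M := fun n =>
    { carrier := Set.range (⇑F)^[n]
      add_mem' := by
        rintro _ _ ⟨x, rfl⟩ ⟨y, rfl⟩
        exact ⟨x + y, hadd n x y⟩
      zero_mem' := ⟨0, hzero n⟩
      smul_mem' := by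
        rintro c _ ⟨x, rfl⟩
        obtain ⟨c', hc'⟩ := ((hσ.iterate n)).surjective c
        exact ⟨c' • x, by rw [hsmul, hc']⟩ } with hRdef
  have hKmem : ∀ n (x : M), x ∈ K n ↔ (⇑F)^[n] x = 0 := fun _ _ => Iff.rfl
  have hRmem : ∀ n (x : M), x ∈ R n ↔ ∃ y, (⇑F)^[n] y = x := fun _ _ => Iff.rfl
  -- monotonicity
  have hKmono : ∀ n, K n ≤ K (n + 1) := by
    intro n x hx
    rw [hKmem] at hx ⊢
    rw [iterate_succ_apply', hx, map_zero]
  have hRmono : ∀ n, R (n + 1) ≤ R n := by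
    intro n x hx
    obtain ⟨y, hy⟩ := hx
    exact ⟨F y, by rw [← iterate_succ_apply]; exact hy⟩
  -- once the kernel chain stabilizes, it stays stable
  have hKstep : ∀ n, K n = K (n + 1) → K (n + 1) = K (n + 2) := by
    intro n h
    refine le_antisymm (hKmono _) ?_
    intro x hx
    rw [hKmem] at hx ⊢
    rw [iterate_succ_apply] at hx ⊢
    have : F x ∈ K (n + 1) := hx
    rw [← h] at this
    exact this
  have hRstep : ∀ n, R n = R (n + 1) → R (n + 1) = R (n + 2) := by
    intro n h
    refine le_antisymm ?_ (hRmono _)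
    rintro _ ⟨y, rfl⟩
    have hy : (⇑F)^[n] y ∈ R (n + 1) := h ▸ ⟨y, rfl⟩
    obtain ⟨z, hz⟩ := hy
    refine ⟨z, ?_⟩
    rw [show n + 2 = (n + 1) + 1 from rfl, iterate_succ_apply', hz]
    exact (Function.iterate_succ_apply' (⇑F) n y).symm
  have hKstab : ∀ n, K n = K (n + 1) → ∀ m, n ≤ m → K m = K n := by
    intro n h m hm
    induction m with
    | zero =>
      have : n = 0 := by omega
      rw [this]
    | succ m ih =>
      rcases Nat.lt_or_ge n (m + 1) with h1 | h1
      · have hnm : n ≤ m := by omega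
        have hm' : K m = K n := ih hnm
        have : K m = K (m + 1) := by
          -- propagate stability from n to m
          clear hm' 
          have : ∀ j, K (n + j) = K (n + j + 1) := by
            intro j
            induction j with
            | zero => exact h
            | succ j ihj => exact hKstep _ ihj
          have h2 := this (m - n)
          have h3 : n + (m - n) = m := by omega
          rw [h3] at h2
          exact h2
        rw [← this, hm']
      · have : m + 1 = n := by omega
        rw [this]
  have hRstab : ∀ n, R n = R (n + 1) → ∀ m, n ≤ m → R m = R n := by
    intro n h m hm
    induction m with
    | zero =>
      have : n = 0 := by omega
      rw [this]
    | succ m ih =>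
      rcases Nat.lt_or_ge n (m + 1) with h1 | h1
      · have hnm : n ≤ m := by omega
        have hm' : R m = R n := ih hnm
        have : R m = R (m + 1) := by
          clear hm'
          have : ∀ j, R (n + j) = R (n + j + 1) := by
            intro j
            induction j with
            | zero => exact h
            | succ j ihj => exact hRstep _ ihj
          have h2 := this (m - n)
          have h3 : n + (m - n) = m := by omega
          rw [h3] at h2
          exact h2
        rw [← this, hm']
      · have : m + 1 = n := by omega
        rw [this]
  set d := Module.finrank k M with hd
  -- existence of stabilization points
  have hKex : ∃ n, K n = K (n + 1) := by
    by_contra h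
    push_neg at h
    have hstrict : ∀ n, K n < K (n + 1) := fun n => lt_of_le_of_ne (hKmono n) (h n)
    have hrank : ∀ n, n ≤ Module.finrank k (K n) := by
      intro n
      induction n with
      | zero => exact Nat.zero_le _
      | succ n ih =>
        have := Submodule.finrank_lt_finrank_of_lt (hstrict n)
        omega
    have h1 := hrank (d + 1)
    have h2 : Module.finrank k (K (d + 1)) ≤ d := Submodule.finrank_le _
    omega
  have hRex : ∃ n, R n = R (n + 1) := by
    by_contra h
    push_neg at h
    have hstrict : ∀ n, R (n + 1) < R n := fun n => lt_of_le_of_ne (hRmono n) (Ne.symm (h n))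
    have hrank : ∀ n, Module.finrank k (R n) + n ≤ Module.finrank k (R 0) := by
      intro n
      induction n with
      | zero => omega
      | succ n ih =>
        have := Submodule.finrank_lt_finrank_of_lt (hstrict n)
        omega
    have h1 := hrank (d + 1)
    have h2 : Module.finrank k (R 0) ≤ d := Submodule.finrank_le _
    omega
  obtain ⟨nK, hnK⟩ := hKex
  obtain ⟨nR, hnR⟩ := hRex
  set m := max nK nR + 1 with hm
  have hKm : ∀ j, m ≤ j → K j = K m := by
    intro j hj
    rw [hKstab nK hnK j (by omega), hKstab nK hnK m (by omega)]
  have hRm : ∀ j, m ≤ j → R j = R m := by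
    intro j hj
    rw [hRstab nR hnR j (by omega), hRstab nR hnR m (by omega)]
  refine ⟨K m, R m, ?_, ?_, ?_, ⟨m, fun x hx => hx⟩, ?_, ?_, ?_⟩
  · -- IsCompl
    constructor
    · rw [Submodule.disjoint_def]
      intro x hx1 hx2
      obtain ⟨y, rfl⟩ := hx2
      rw [hKmem, ← Function.iterate_add_apply] at hx1
      have hy : y ∈ K (m + m) := hx1
      rw [hKm (m + m) (by omega)] at hy
      exact (hKmem m y).mp hy
    · rw [codisjoint_iff_le_sup]
      intro x _
      have hx : (⇑F)^[m] x ∈ R m := ⟨x, rfl⟩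
      rw [← hRm (m + m) (by omega)] at hx
      obtain ⟨y, hy⟩ := hx
      have h1 : x - (⇑F)^[m] y ∈ K m := by
        rw [hKmem, hsub, ← Function.iterate_add_apply, hy, sub_self]
      have h2 : (⇑F)^[m] y ∈ R m := ⟨y, rfl⟩
      have : x = (x - (⇑F)^[m] y) + (⇑F)^[m] y := by abel
      rw [this]
      exact Submodule.add_mem_sup h1 h2
  · -- F-stability of K m
    intro x hx
    rw [hKmem] at hx ⊢
    rw [← iterate_succ_apply, iterate_succ_apply', hx, map_zero]
  · -- F-stability of R m
    rintro _ ⟨y, rfl⟩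
    exact ⟨F y, by rw [← iterate_succ_apply, iterate_succ_apply']⟩
  · -- MapsTo
    rintro _ ⟨y, rfl⟩
    exact ⟨F y, by rw [← iterate_succ_apply, iterate_succ_apply']⟩
  · -- InjOn
    intro x hx y hy hxy
    have hsubmem : x - y ∈ R m := Submodule.sub_mem _ hx hy
    have hker : x - y ∈ K m := by
      rw [hKmem, hm, iterate_succ_apply, map_sub, hxy, sub_self, hzero]
    -- disjointness gives x - y = 0
    obtain ⟨z, hz⟩ := hsubmem
    rw [hKmem, ← hz, ← Function.iterate_add_apply] at hker
    have : z ∈ K (m + m) := hker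
    rw [hKm (m + m) (by omega)] at this
    have hz0 : (⇑F)^[m] z = 0 := this
    have : x - y = 0 := by rw [← hz, hz0]
    exact sub_eq_zero.mp this
  · -- SurjOn
    intro x hx
    rw [← hRm (m + 1) (by omega)] at hx
    obtain ⟨y, hy⟩ := hx
    exact ⟨(⇑F)^[m] y, ⟨y, rfl⟩, (Function.iterate_succ_apply' (⇑F) m y).symm.trans hy⟩
end

section
/- Let p be a prime, q a power of p, k an algebraic closure of 𝔽_p, and σ : k → k the automorphism x ↦ x^q. Let M be a finite-dimensional k-vector space and F : M → M a bijective σ-semilinear map. Then there exists a k-basis of M all of whose elements are fixed points of F. -/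
open Polynomial in
lemma aux_root (k : Type*) [Field k] [IsAlgClosed k] (p : ℕ) [Fact p.Prime] [CharP k p]
    (q e : ℕ) (he : 0 < e) (hq : q = p ^ e)
    (r : ℕ) (d : Fin r → k) (j0 : Fin r) (hd : d j0 ≠ 0) :
    ∃ t : k, t ≠ 0 ∧ t = ∑ j : Fin r, d j * t ^ q ^ (j.1 + 1) := by
  have hq2 : 2 ≤ q := by
    subst hq; calc 2 ≤ p := (Fact.out : p.Prime).two_le
      _ ≤ p ^ e := Nat.le_self_pow he.ne' p
  set P : k[X] := X - ∑ j : Fin r, C (d j) * X ^ (q ^ (j.1 + 1)) with hP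
  have hder : P.derivative = 1 := by
    rw [hP, derivative_sub, derivative_X, derivative_sum]
    have : ∀ j : Fin r, derivative (C (d j) * X ^ q ^ (j.1 + 1)) = 0 := by
      intro j
      rw [derivative_C_mul_X_pow]
      have : ((q ^ (j.1 + 1) : ℕ) : k) = 0 := by
        rw [CharP.cast_eq_zero_iff k p]
        exact dvd_pow (hq ▸ dvd_pow_self p he.ne') (Nat.succ_ne_zero _)
      rw [this, mul_zero, map_zero, zero_mul]
    simp [this]
  have hcoeff : P.coeff (q ^ (j0.1 + 1)) = -(d j0) := by
    rw [hP, coeff_sub, finset_sum_coeff]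
    have h1 : (X : k[X]).coeff (q ^ (j0.1 + 1)) = 0 := by
      rw [coeff_X]
      have : q ^ (j0.1+1) ≠ 1 := by
        have : 2 ≤ q ^ (j0.1+1) := le_trans hq2 (Nat.le_self_pow (Nat.succ_ne_zero _) q)
        omega
      simp [Ne.symm this]
    rw [h1]
    rw [Finset.sum_eq_single j0]
    · simp [coeff_C_mul, coeff_X_pow]
    · intro b _ hb
      rw [coeff_C_mul, coeff_X_pow, if_neg, mul_zero]
      intro hbe
      exact hb (Fin.ext (by
        have := Nat.pow_right_injective hq2 hbe.symm
        omega))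
    · simp
  have hne : P ≠ 0 := fun h => hd (by simpa [h] using hcoeff.symm)
  have hdeg : 2 ≤ P.natDegree := by
    have := le_natDegree_of_ne_zero (n := q ^ (j0.1+1)) (p := P) (by rw [hcoeff]; simpa using hd)
    exact le_trans (le_trans hq2 (Nat.le_self_pow (Nat.succ_ne_zero _) q)) this
  have hsep : P.Separable := by rw [Polynomial.Separable, hder]; exact isCoprime_one_right
  have hcard : Fintype.card (P.rootSet k) = P.natDegree :=
    card_rootSet_eq_natDegree hsep (IsAlgClosed.splits _)
  have : ∃ a b : P.rootSet k, a ≠ b := by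
    apply Fintype.exists_pair_of_one_lt_card
    omega
  obtain ⟨a, b, hab⟩ := this
  have key : ∀ t : k, t ∈ P.rootSet k → t = ∑ j : Fin r, d j * t ^ q ^ (j.1 + 1) := by
    intro t ht
    rw [mem_rootSet] at ht
    have h2 := ht.2
    rw [show (aeval t : k[X] → k) = eval t from coe_aeval_eq_eval t] at h2
    rw [hP, eval_sub, eval_X, sub_eq_zero] at h2
    refine h2.trans ?_
    rw [Polynomial.eval_finset_sum]
    simp
  by_cases ha : (a : k) = 0
  · refine ⟨b, ?_, key b b.2⟩
    intro hb0
    exact hab (Subtype.ext (by rw [ha, hb0]))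
  · exact ⟨a, ha, key a a.2⟩

open Polynomial in
lemma aux_AS (k : Type*) [Field k] [IsAlgClosed k] (q : ℕ) (hq2 : 2 ≤ q) (lam : k) :
    ∃ μ : k, μ ^ q - μ = lam := by
  set P : k[X] := X ^ q - X - C lam with hP
  have hd : P.degree = q := by
    have h1 : (X ^ q : k[X]).degree = q := degree_X_pow q
    have h2 : (X + C lam : k[X]).degree ≤ 1 := by
      calc (X + C lam : k[X]).degree ≤ max (X : k[X]).degree (C lam).degree := degree_add_le _ _
        _ ≤ 1 := max_le (le_of_eq degree_X) (le_trans degree_C_le (by norm_num))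
    have hlt : (X + C lam : k[X]).degree < (X ^ q : k[X]).degree := by
      rw [h1]
      exact lt_of_le_of_lt h2 (by exact_mod_cast Nat.lt_of_lt_of_le one_lt_two hq2)
    have : P = X ^ q - (X + C lam) := by ring
    rw [this, degree_sub_eq_left_of_degree_lt hlt, h1]
  have hd0 : P.degree ≠ 0 := by rw [hd]; exact_mod_cast (by omega : (q:ℕ) ≠ 0)
  obtain ⟨μ, hμ⟩ := IsAlgClosed.exists_root P hd0
  refine ⟨μ, ?_⟩
  have := hμ
  rw [IsRoot, hP] at this
  simp only [eval_sub, eval_pow, eval_X, eval_C] at this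
  linear_combination this


open Finset in
lemma exists_fixed_ne_zero
    (p : ℕ) [Fact p.Prime] (q e : ℕ) (he : 0 < e) (hq : q = p ^ e)
    (k : Type*) [Field k] [IsAlgClosed k] [CharP k p]
    (σ : k →+* k) (hσ : ∀ x : k, σ x = x ^ q)
    (M : Type*) [AddCommGroup M] [Module k M] [FiniteDimensional k M] [Nontrivial M]
    (F : M →ₛₗ[σ] M) (hF : Function.Injective F) :
    ∃ v : M, v ≠ 0 ∧ F v = v := by
  obtain ⟨m, hm⟩ := exists_ne (0 : M)
  set g : ℕ → M := fun i => F^[i] m with hg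
  have hdep : ∃ n, ¬ LinearIndependent k (fun i : Fin (n + 1) => g i) := by
    refine ⟨Module.finrank k M, fun h => ?_⟩
    have := h.fintype_card_le_finrank
    simp at this
  classical
  have hrspec := Nat.find_spec hdep
  have hr0 : Nat.find hdep ≠ 0 := by
    intro h
    apply hrspec
    rw [h]
    haveI : Unique (Fin (0 + 1)) := inferInstanceAs (Unique (Fin 1))
    apply linearIndependent_unique_iff.mpr
    simpa [hg] using hm
  obtain ⟨r', hr'⟩ : ∃ r', Nat.find hdep = r' + 1 :=
    ⟨Nat.find hdep - 1, (Nat.succ_pred_eq_of_pos (Nat.pos_of_ne_zero hr0)).symm⟩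
  have hLI : LinearIndependent k (fun i : Fin (r' + 1) => g i) :=
    not_not.mp (Nat.find_min hdep (show r' < Nat.find hdep by omega))
  rw [hr'] at hrspec
  set r := r' + 1 with hrdef
  -- g r ∈ span of previous
  have hsnoc : (fun i : Fin (r + 1) => g i) = Fin.snoc (fun i : Fin r => g i) (g r) := by
    funext i
    refine Fin.lastCases ?_ ?_ i
    · simp [Fin.snoc_last]
    · intro j
      simp [Fin.snoc_castSucc]
  have hmem : g r ∈ Submodule.span k (Set.range (fun i : Fin r => g i)) := by
    by_contra hmem
    exact hrspec (by
      rw [hsnoc, linearIndependent_fin_snoc]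
      exact ⟨hLI, hmem⟩)
  rw [Submodule.mem_span_range_iff_exists_fun] at hmem
  obtain ⟨c, hc⟩ := hmem
  set ch : ℕ → k := fun i => if h : i < r then c ⟨i, h⟩ else 0 with hch
  have hc' : ∑ i ∈ range r, ch i • g i = g r := by
    rw [← hc, ← Fin.sum_univ_eq_sum_range]
    refine Finset.sum_congr rfl fun i _ => ?_
    simp [hch, i.2]
  -- c is nonzero
  have hcne : ∃ i : Fin r, c i ≠ 0 := by
    by_contra h
    push_neg at h
    have : g r = 0 := by rw [← hc]; simp [h]
    have : m = 0 := by
      have hinj : Function.Injective (F^[r]) := Function.Injective.iterate hF r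
      have h0 : F^[r] (0 : M) = 0 := Function.iterate_fixed (map_zero F) r
      exact hinj (by rw [h0]; exact this)
    exact hm this
  obtain ⟨i0, hi0⟩ := hcne
  set d : Fin r → k := fun j => (ch (r - 1 - j.1)) ^ q ^ j.1 with hd
  have hj0 : ∃ j0 : Fin r, d j0 ≠ 0 := by
    refine ⟨⟨r - 1 - i0.1, by omega⟩, ?_⟩
    have h1 : r - 1 - (r - 1 - i0.1) = i0.1 := by omega
    simp only [hd, h1]
    have : ch i0.1 = c i0 := by simp [hch, i0.2]
    rw [this]
    exact pow_ne_zero _ hi0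
  obtain ⟨j0, hj0⟩ := hj0
  obtain ⟨t, ht0, htEq⟩ := aux_root k p q e he hq r d j0 hj0
  set A : ℕ → k := fun i => ∑ j ∈ range (i + 1), ch (i - j) ^ q ^ j * t ^ q ^ (j + 1) with hA
  have hσpow : ∀ (x : k) (n : ℕ), σ (x ^ q ^ n) = x ^ q ^ (n + 1) := by
    intro x n
    rw [map_pow, hσ, ← pow_mul, ← pow_succ']
  have key1 : A r' = t := by
    rw [hA]
    simp only []
    rw [← Fin.sum_univ_eq_sum_range (fun j => ch (r' - j) ^ q ^ j * t ^ q ^ (j + 1)) r]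
    conv_rhs => rw [htEq]
    refine Finset.sum_congr rfl fun j _ => ?_
    simp only [hd]
    have : r - 1 - (j : ℕ) = r' - (j : ℕ) := by omega
    rw [this]
  have keyS : ∀ i, A (i + 1) = σ (A i) + ch (i + 1) * σ t := by
    intro i
    rw [hA]
    simp only []
    rw [Finset.sum_range_succ' (fun j => ch (i + 1 - j) ^ q ^ j * t ^ q ^ (j + 1)) (i + 1)]
    rw [map_sum]
    congr 1
    · refine Finset.sum_congr rfl fun j _ => ?_
      rw [map_mul, hσpow, hσpow]
      congr 3
      omega
    · simp [hσ]
  have key0 : A 0 = ch 0 * σ t := by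
    simp [hA, hσ]
  -- the fixed vector
  set v : M := ∑ i ∈ range r, A i • g i with hv
  have hgsucc : ∀ i, F (g i) = g (i + 1) := by
    intro i
    rw [hg]
    exact (Function.iterate_succ_apply' F i m).symm
  have hFv : F v = v := by
    rw [hv, map_sum]
    simp only [LinearMap.map_smulₛₗ, hgsucc]
    rw [hrdef] at hc' ⊢
    rw [Finset.sum_range_succ (fun i => σ (A i) • g (i + 1)) r']
    rw [← hc']
    rw [key1, Finset.smul_sum]
    simp only [smul_smul]
    rw [Finset.sum_range_succ' (fun i => (σ t * ch i) • g i) r']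
    conv_rhs => rw [Finset.sum_range_succ' (fun i => A i • g i) r']
    rw [← add_assoc, ← Finset.sum_add_distrib]
    congr 1
    · refine Finset.sum_congr rfl fun i _ => ?_
      rw [keyS i, add_smul]
      congr 2
      ring
    · rw [key0]
      congr 1
      ring
  refine ⟨v, ?_, hFv⟩
  intro hv0
  have := Fintype.linearIndependent_iff.mp hLI (fun i => A i.1) ?_ ⟨r', by omega⟩
  · rw [key1] at this; exact ht0 this
  · rw [← hv0, hv, ← Fin.sum_univ_eq_sum_range (fun i => A i • g i) r]

/-- Let `p` be a prime, `q` a power of `p`, `k` an algebraic closure of `𝔽_p` and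
`σ : k → k` the automorphism `x ↦ x ^ q`.  If `M` is a finite-dimensional `k`-vector space
and `F : M → M` is a bijective `σ`-semilinear map, then `M` has a `k`-basis consisting of
fixed points of `F`. -/
theorem exists_basis_of_fixedPoints
    (p : ℕ) [Fact p.Prime] (q e : ℕ) (he : 0 < e) (hq : q = p ^ e)
    (k : Type*) [Field k] [Algebra (ZMod p) k] [IsAlgClosure (ZMod p) k]
    (σ : k →+* k) (hσ : ∀ x : k, σ x = x ^ q)
    (M : Type*) [AddCommGroup M] [Module k M] [FiniteDimensional k M]
    (F : M →ₛₗ[σ] M) (hF : Function.Bijective F) :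
    ∃ b : Module.Basis (Fin (Module.finrank k M)) k M, ∀ i, F (b i) = b i := by
  classical
  haveI : IsAlgClosed k := IsAlgClosure.isAlgClosed (ZMod p)
  haveI : CharP k p := charP_of_injective_algebraMap (algebraMap (ZMod p) k).injective p
  have hq2 : 2 ≤ q := by
    subst hq
    calc 2 ≤ p := (Fact.out : p.Prime).two_le
      _ ≤ p ^ e := Nat.le_self_pow he.ne' p
  have hσsurj : Function.Surjective σ := by
    intro y
    obtain ⟨z, hz⟩ := IsAlgClosed.exists_pow_nat_eq y (show 0 < q by omega)
    exact ⟨z, by rw [hσ]; exact hz⟩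
  haveI : RingHomSurjective σ := ⟨hσsurj⟩
  set S : Set M := {m | F m = m} with hSdef
  set N : Submodule k M := Submodule.span k S with hNdef
  -- we can solve F w - w = u for any u ∈ N, with w ∈ N
  have hsolve : ∀ u ∈ N, ∃ w ∈ N, F w - w = u := by
    intro u hu
    obtain ⟨cf, hsupp, hsum⟩ := Submodule.mem_span_set.mp hu
    choose μ hμ using fun lam : k => aux_AS k q hq2 lam
    refine ⟨∑ s ∈ cf.support, μ (cf s) • s, ?_, ?_⟩
    · exact Submodule.sum_mem _ fun s hs =>
        Submodule.smul_mem _ _ (Submodule.subset_span (hsupp hs))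
    · rw [map_sum, ← hsum, Finsupp.sum, ← Finset.sum_sub_distrib]
      refine Finset.sum_congr rfl fun s hs => ?_
      have hFs : F s = s := hsupp hs
      rw [LinearMap.map_smulₛₗ, hFs, ← sub_smul, hσ, hμ (cf s)]
  -- span of fixed points is everything
  have hNtop : N = ⊤ := by
    by_contra hne
    haveI : Nontrivial (M ⧸ N) :=
      Submodule.Quotient.nontrivial_iff.mpr hne
    have hcomap : N ≤ N.comap F := by
      rw [hNdef, Submodule.span_le]
      intro s hs
      have hFs : F s = s := hs
      simp only [SetLike.mem_coe, Submodule.mem_comap, hFs]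
      exact Submodule.subset_span hs
    set Fbar : (M ⧸ N) →ₛₗ[σ] (M ⧸ N) := N.mapQ N F hcomap with hFbar
    have hmap : Submodule.map F N = N := by
      rw [hNdef, Submodule.map_span]
      congr 1
      ext x
      constructor
      · rintro ⟨s, hs, rfl⟩
        have : F s = s := hs
        rwa [this]
      · intro hx
        have : F x = x := hx
        exact ⟨x, hx, this⟩
    have hinj : Function.Injective Fbar := by
      intro a b hab
      obtain ⟨x, rfl⟩ := N.mkQ_surjective a
      obtain ⟨y, rfl⟩ := N.mkQ_surjective b
      simp only [Submodule.mkQ_apply] at hab ⊢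
      rw [hFbar, Submodule.mapQ_apply, Submodule.mapQ_apply] at hab
      rw [Submodule.Quotient.eq] at hab ⊢
      rw [← map_sub] at hab
      rw [← hmap] at hab
      obtain ⟨z, hzN, hz⟩ := hab
      rwa [← hF.1 hz]
    obtain ⟨vbar, hv0, hvfix⟩ := exists_fixed_ne_zero p q e he hq k σ hσ (M ⧸ N) Fbar hinj
    obtain ⟨v, rfl⟩ := N.mkQ_surjective vbar
    have hFvN : F v - v ∈ N := by
      rw [← Submodule.Quotient.eq]
      simp only [Submodule.mkQ_apply] at hvfix
      rw [hFbar, Submodule.mapQ_apply] at hvfix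
      exact hvfix
    obtain ⟨w, hwN, hw⟩ := hsolve (F v - v) hFvN
    have hfix : F (v - w) = v - w := by
      rw [map_sub]
      have : F w = w + (F v - v) := by rw [← hw]; abel
      rw [this]
      abel
    have hvwN : v - w ∈ N := Submodule.subset_span (show v - w ∈ S from hfix)
    have hvN : v ∈ N := by
      have := N.add_mem hvwN hwN
      simpa using this
    exact hv0 ((Submodule.Quotient.mk_eq_zero N).mpr hvN)
  -- extract a basis from the spanning set of fixed points
  obtain ⟨b, hbS, hbspan, hbli⟩ := exists_linearIndependent k S
  rw [← hNdef, hNtop] at hbspan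
  have hfin : b.Finite := hbli.set_finite_of_isNoetherian
  haveI := hfin.fintype
  let B : Module.Basis b k M := Module.Basis.mk hbli (by rw [Subtype.range_coe, hbspan])
  let eqv : b ≃ Fin (Module.finrank k M) := B.indexEquiv (Module.finBasis k M)
  refine ⟨B.reindex eqv, fun i => ?_⟩
  rw [Module.Basis.reindex_apply]
  have : B (eqv.symm i) = ((eqv.symm i : b) : M) := Module.Basis.mk_apply _ _ _
  rw [this]
  exact hbS (eqv.symm i).2
end

section
/- Let p be a prime, n ≥ 0, A a commutative ring, and S, T subrings of A. Let r ∈ W_{n+1}(A) and suppose r = h' + a' for some h', a' ∈ W_{n+1}(A) such that all coefficients of h' lie in S and all coefficients of a' lie in T. Suppose moreover that the truncation r_{<n} ∈ W_n(A) satisfies r_{<n} = h + a, where all coefficients of h ∈ W_n(A) lie in S and all coefficients of a ∈ W_n(A) lie in T. Then there exist ĥ, â ∈ W_{n+1}(A), with all coefficients of ĥ in S and all coefficients of â in T, such that ĥ_{<n} = h, â_{<n} = a, and r = ĥ + â. -/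
section Aux

variable {p : ℕ} [Fact p.Prime] {A : Type*} [CommRing A]

private lemma wv_exists_lift (S : Subring A) (x : WittVector p A)
    (hx : ∀ i, x.coeff i ∈ S) :
    ∃ x' : WittVector p S, WittVector.map S.subtype x' = x := by
  refine ⟨WittVector.mk p fun i => ⟨x.coeff i, hx i⟩, ?_⟩
  ext i
  simp [WittVector.map_coeff, WittVector.coeff_mk]

private lemma wv_add_mem (S : Subring A) {x y : WittVector p A}
    (hx : ∀ i, x.coeff i ∈ S) (hy : ∀ i, y.coeff i ∈ S) (i : ℕ) :
    (x + y).coeff i ∈ S := by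
  obtain ⟨x', rfl⟩ := wv_exists_lift S x hx
  obtain ⟨y', rfl⟩ := wv_exists_lift S y hy
  rw [← map_add, WittVector.map_coeff]
  exact SetLike.coe_mem _

private lemma wv_sub_mem (S : Subring A) {x y : WittVector p A}
    (hx : ∀ i, x.coeff i ∈ S) (hy : ∀ i, y.coeff i ∈ S) (i : ℕ) :
    (x - y).coeff i ∈ S := by
  obtain ⟨x', rfl⟩ := wv_exists_lift S x hx
  obtain ⟨y', rfl⟩ := wv_exists_lift S y hy
  rw [← map_sub, WittVector.map_coeff]
  exact SetLike.coe_mem _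

private lemma wv_neg_mem (S : Subring A) {x : WittVector p A}
    (hx : ∀ i, x.coeff i ∈ S) (i : ℕ) :
    (-x).coeff i ∈ S := by
  obtain ⟨x', rfl⟩ := wv_exists_lift S x hx
  rw [← map_neg, WittVector.map_coeff]
  exact SetLike.coe_mem _

private lemma wv_iterate_versch_add (a b : WittVector p A) (m : ℕ) :
    WittVector.verschiebung^[m] a + WittVector.verschiebung^[m] b
      = WittVector.verschiebung^[m] (a + b) := by
  induction m with
  | zero => rfl
  | succ k ih =>
      rw [Function.iterate_succ_apply', Function.iterate_succ_apply',
        Function.iterate_succ_apply', ← ih, map_add]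

private lemma wv_add_coeff_eq (x y : WittVector p A) (n : ℕ)
    (hx : ∀ i < n, x.coeff i = 0) (hy : ∀ i < n, y.coeff i = 0) :
    (x + y).coeff n = x.coeff n + y.coeff n := by
  have key : ∀ z : WittVector p A, (WittVector.verschiebung^[n] z).coeff n = z.coeff 0 := by
    intro z
    simpa using WittVector.iterate_verschiebung_coeff z n 0
  calc (x + y).coeff n
      = (WittVector.verschiebung^[n] (x.shift n + y.shift n)).coeff n := by
        rw [← wv_iterate_versch_add, ← WittVector.eq_iterate_verschiebung hx,
          ← WittVector.eq_iterate_verschiebung hy]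
    _ = (x.shift n + y.shift n).coeff 0 := key _
    _ = x.coeff n + y.coeff n := by
        rw [WittVector.add_coeff_zero, WittVector.shift_coeff, WittVector.shift_coeff,
          Nat.add_zero]

end Aux

/-- Let `p` be a prime, `A` a commutative ring, and `S`, `T` subrings of `A`.
Let `r ∈ W_{n+1}(A)` with `r = h' + a'`, where all coefficients of `h'` lie in `S` and all
coefficients of `a'` lie in `T`.  If the truncation `r_{<n} ∈ W_n(A)` decomposes as
`r_{<n} = h + a` with the coefficients of `h` in `S` and those of `a` in `T`, then this
decomposition lifts: there are `ĥ, â ∈ W_{n+1}(A)` with coefficients in `S` resp. `T`,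
with `ĥ_{<n} = h`, `â_{<n} = a`, and `r = ĥ + â`. -/
theorem truncatedWittVector_lift_decomposition
    (p : ℕ) [Fact p.Prime] (n : ℕ) {A : Type*} [CommRing A] (S T : Subring A)
    (r h' a' : TruncatedWittVector p (n + 1) A)
    (hh' : ∀ i, h'.coeff i ∈ S) (ha' : ∀ i, a'.coeff i ∈ T)
    (hr : r = h' + a')
    (h a : TruncatedWittVector p n A)
    (hh : ∀ i, h.coeff i ∈ S) (ha : ∀ i, a.coeff i ∈ T)
    (htr : TruncatedWittVector.truncate (Nat.le_succ n) r = h + a) :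
    ∃ hhat ahat : TruncatedWittVector p (n + 1) A,
      (∀ i, hhat.coeff i ∈ S) ∧ (∀ i, ahat.coeff i ∈ T) ∧
      TruncatedWittVector.truncate (Nat.le_succ n) hhat = h ∧
      TruncatedWittVector.truncate (Nat.le_succ n) ahat = a ∧
      r = hhat + ahat := by
  classical
  -- out coefficients
  have hout : ∀ (m : ℕ) (x : TruncatedWittVector p m A) (i : ℕ),
      x.out.coeff i = if hi : i < m then x.coeff ⟨i, hi⟩ else 0 := fun _ _ _ => rfl
  have houtS : ∀ (m : ℕ) (x : TruncatedWittVector p m A) (U : Subring A),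
      (∀ j, x.coeff j ∈ U) → ∀ i, x.out.coeff i ∈ U := by
    intro m x U hx i
    rw [hout]
    split_ifs with hi
    · exact hx _
    · exact zero_mem U
  have htr_out : ∀ (m : ℕ) (x : TruncatedWittVector p m A),
      WittVector.truncate m x.out = x := by
    intro m x
    apply TruncatedWittVector.ext
    intro i
    rw [WittVector.coeff_truncate, TruncatedWittVector.coeff_out]
  set hW := h.out with hWdef
  set aW := a.out with aWdef
  set h'W := h'.out with h'Wdef
  set a'W := a'.out with a'Wdef
  have hhWS : ∀ i, hW.coeff i ∈ S := houtS _ _ _ hh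
  have haWT : ∀ i, aW.coeff i ∈ T := houtS _ _ _ ha
  have hh'WS : ∀ i, h'W.coeff i ∈ S := houtS _ _ _ hh'
  have ha'WT : ∀ i, a'W.coeff i ∈ T := houtS _ _ _ ha'
  have huS : ∀ i, (h'W - hW).coeff i ∈ S := wv_sub_mem S hh'WS hhWS
  have hvT : ∀ i, (a'W - aW).coeff i ∈ T := wv_sub_mem T ha'WT haWT
  -- truncations
  have t1 : WittVector.truncate (n + 1) (h'W + a'W) = r := by
    rw [map_add, htr_out, htr_out, hr]
  have t2 : WittVector.truncate n (h'W + a'W) = h + a := by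
    rw [← TruncatedWittVector.truncate_wittVector_truncate (Nat.le_succ n), t1, htr]
  have t3 : WittVector.truncate n (hW + aW) = h + a := by
    rw [map_add, htr_out, htr_out]
  have tw : WittVector.truncate n ((h'W - hW) + (a'W - aW)) = 0 := by
    have e : (h'W - hW) + (a'W - aW) = (h'W + a'W) - (hW + aW) := by ring
    rw [e, map_sub, t2, t3, sub_self]
  have hwlow : ∀ i < n, ((h'W - hW) + (a'W - aW)).coeff i = 0 :=
    (WittVector.mem_ker_truncate _ _).mp (by rwa [RingHom.mem_ker])
  -- lower coefficients of u lie in T as well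
  have tuv : WittVector.truncate n (h'W - hW) = WittVector.truncate n (-(a'W - aW)) := by
    have e : h'W - hW = ((h'W - hW) + (a'W - aW)) + (-(a'W - aW)) := by ring
    rw [e, map_add, tw, zero_add]
  have huT : ∀ i < n, (h'W - hW).coeff i ∈ T := by
    intro i hi
    have e : (h'W - hW).coeff i = (-(a'W - aW)).coeff i := by
      have := congrArg (fun z => TruncatedWittVector.coeff ⟨i, hi⟩ z) tuv
      simp only [WittVector.coeff_truncate] at this
      exact this
    rw [e]
    exact wv_neg_mem T hvT i
  -- the truncations of u and v, re-lifted with zero on top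
  set u₀ := WittVector.mk p (fun i => if i < n then (h'W - hW).coeff i else 0) with hu₀def
  set v₀ := WittVector.mk p (fun i => if i < n then (a'W - aW).coeff i else 0) with hv₀def
  have hu₀c : ∀ i, u₀.coeff i = if i < n then (h'W - hW).coeff i else 0 := fun _ => rfl
  have hv₀c : ∀ i, v₀.coeff i = if i < n then (a'W - aW).coeff i else 0 := fun _ => rfl
  have hu₀S : ∀ i, u₀.coeff i ∈ S := by
    intro i; rw [hu₀c]; split_ifs; exacts [huS i, zero_mem S]
  have hu₀T : ∀ i, u₀.coeff i ∈ T := by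
    intro i; rw [hu₀c]; split_ifs with hi; exacts [huT i hi, zero_mem T]
  have hv₀T : ∀ i, v₀.coeff i ∈ T := by
    intro i; rw [hv₀c]; split_ifs; exacts [hvT i, zero_mem T]
  have tru₀ : WittVector.truncate n u₀ = WittVector.truncate n (h'W - hW) := by
    apply TruncatedWittVector.ext
    intro i
    rw [WittVector.coeff_truncate, WittVector.coeff_truncate, hu₀c, if_pos i.2]
  have trv₀ : WittVector.truncate n v₀ = WittVector.truncate n (a'W - aW) := by
    apply TruncatedWittVector.ext
    intro i
    rw [WittVector.coeff_truncate, WittVector.coeff_truncate, hv₀c, if_pos i.2]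
  have hus : ∀ i < n, ((h'W - hW) - u₀).coeff i = 0 :=
    (WittVector.mem_ker_truncate _ _).mp
      (by rw [RingHom.mem_ker, map_sub, tru₀, sub_self])
  have hvt : ∀ i < n, ((a'W - aW) - v₀).coeff i = 0 :=
    (WittVector.mem_ker_truncate _ _).mp
      (by rw [RingHom.mem_ker, map_sub, trv₀, sub_self])
  have huv₀tr : WittVector.truncate n (u₀ + v₀) = 0 := by
    rw [map_add, tru₀, trv₀, ← map_add]
    exact tw
  have huv₀low : ∀ i < n, (u₀ + v₀).coeff i = 0 :=
    (WittVector.mem_ker_truncate _ _).mp (by rwa [RingHom.mem_ker])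
  have hinnerlow : ∀ i < n, (((a'W - aW) - v₀) + (u₀ + v₀)).coeff i = 0 :=
    (WittVector.mem_ker_truncate _ _).mp
      (by rw [RingHom.mem_ker, map_add, map_sub, trv₀, sub_self, zero_add, huv₀tr])
  -- the top coefficient decomposes
  have hsS : ((h'W - hW) - u₀).coeff n ∈ S := wv_sub_mem S huS hu₀S n
  have htT : ((a'W - aW) - v₀).coeff n ∈ T := wv_sub_mem T hvT hv₀T n
  have hdT : (u₀ + v₀).coeff n ∈ T := wv_add_mem T hu₀T hv₀T n
  have hwcoeff : ((h'W - hW) + (a'W - aW)).coeff n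
      = ((h'W - hW) - u₀).coeff n
        + ((((a'W - aW) - v₀)).coeff n + (u₀ + v₀).coeff n) := by
    have e : (h'W - hW) + (a'W - aW)
        = ((h'W - hW) - u₀) + (((a'W - aW) - v₀) + (u₀ + v₀)) := by ring
    rw [e, wv_add_coeff_eq _ _ n hus hinnerlow,
      wv_add_coeff_eq _ _ n hvt huv₀low]
  -- the correction terms
  set es := WittVector.mk p (fun i => if i = n then ((h'W - hW) - u₀).coeff n else 0)
    with hesdef
  set et := WittVector.mk p
    (fun i => if i = n then (((a'W - aW) - v₀)).coeff n + (u₀ + v₀).coeff n else 0)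
    with hetdef
  have hesc : ∀ i, es.coeff i = if i = n then ((h'W - hW) - u₀).coeff n else 0 := fun _ => rfl
  have hetc : ∀ i, et.coeff i
      = if i = n then (((a'W - aW) - v₀)).coeff n + (u₀ + v₀).coeff n else 0 := fun _ => rfl
  have hesS : ∀ i, es.coeff i ∈ S := by
    intro i; rw [hesc]; split_ifs; exacts [hsS, zero_mem S]
  have hetT : ∀ i, et.coeff i ∈ T := by
    intro i; rw [hetc]; split_ifs; exacts [add_mem htT hdT, zero_mem T]
  have heslow : ∀ i < n, es.coeff i = 0 := by
    intro i hi; rw [hesc, if_neg hi.ne]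
  have hetlow : ∀ i < n, et.coeff i = 0 := by
    intro i hi; rw [hetc, if_neg hi.ne]
  have hestr : WittVector.truncate n es = 0 := by
    have := (WittVector.mem_ker_truncate n es).mpr heslow
    rwa [RingHom.mem_ker] at this
  have hettr : WittVector.truncate n et = 0 := by
    have := (WittVector.mem_ker_truncate n et).mpr hetlow
    rwa [RingHom.mem_ker] at this
  have hesetlow : ∀ i < n, (es + et).coeff i = 0 :=
    (WittVector.mem_ker_truncate _ _).mp
      (by rw [RingHom.mem_ker, map_add, hestr, hettr, add_zero])
  have heset : WittVector.truncate (n + 1) (es + et)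
      = WittVector.truncate (n + 1) ((h'W - hW) + (a'W - aW)) := by
    apply TruncatedWittVector.ext
    intro i
    rw [WittVector.coeff_truncate, WittVector.coeff_truncate]
    rcases Nat.lt_succ_iff_lt_or_eq.mp i.2 with hi | hi
    · rw [hesetlow _ hi, hwlow _ hi]
    · have : (i : ℕ) = n := hi
      rw [this, hwcoeff, wv_add_coeff_eq _ _ n heslow hetlow, hesc, hetc,
        if_pos rfl, if_pos rfl]
  -- assemble
  refine ⟨WittVector.truncate (n + 1) (hW + es), WittVector.truncate (n + 1) (aW + et),
    ?_, ?_, ?_, ?_, ?_⟩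
  · intro i
    rw [WittVector.coeff_truncate]
    exact wv_add_mem S hhWS hesS i
  · intro i
    rw [WittVector.coeff_truncate]
    exact wv_add_mem T haWT hetT i
  · rw [TruncatedWittVector.truncate_wittVector_truncate, map_add, hestr, htr_out, add_zero]
  · rw [TruncatedWittVector.truncate_wittVector_truncate, map_add, hettr, htr_out, add_zero]
  · have final : WittVector.truncate (n + 1) ((hW + es) + (aW + et)) = r := by
      calc WittVector.truncate (n + 1) ((hW + es) + (aW + et))
          = WittVector.truncate (n + 1) (hW + aW)
            + WittVector.truncate (n + 1) (es + et) := by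
            rw [← map_add]; congr 1; ring
        _ = WittVector.truncate (n + 1) (hW + aW)
            + WittVector.truncate (n + 1) ((h'W - hW) + (a'W - aW)) := by rw [heset]
        _ = WittVector.truncate (n + 1) ((hW + aW) + ((h'W - hW) + (a'W - aW))) :=
            (map_add _ _ _).symm
        _ = WittVector.truncate (n + 1) (h'W + a'W) := by congr 1; ring
        _ = r := t1
    rw [← map_add, final]
end

section
/- Let p be a prime and n ≥ 0. Let P_n ∈ ℤ[X_0,…,X_{n−1},Y_0,…,Y_{n−1}] be the last (n-th) coefficient of the (n+1)-truncated p-typical Witt vector F((X_0,…,X_{n−1},0)) − (X_0,…,X_{n−1},0) − (Y_0,…,Y_{n−1},0) over the polynomial ring ℤ[X_0,…,X_{n−1},Y_0,…,Y_{n−1}]. Then for every commutative ring A of characteristic p and all r = (r_0,…,r_n), h = (h_0,…,h_n) ∈ W_{n+1}(A), the Witt vector ℘(r) − (h_0,…,h_{n−1},0) ∈ W_{n+1}(A) has truncation ℘(r_{<n}) − h_{<n} ∈ W_n(A) and last coefficient equal to r_n^p − r_n + P_n(r_0,…,r_{n−1},h_0,…,h_{n−1}). -/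
namespace WittVector

variable {p : ℕ} [hp : Fact p.Prime] {R : Type*} [CommRing R]

theorem iter_versch_coeff_lt (x : WittVector p R) :
    ∀ (n j : ℕ), j < n → (verschiebung^[n] x).coeff j = 0 := by
  intro n
  induction n with
  | zero => omega
  | succ m ih =>
    intro j hj
    rw [Function.iterate_succ_apply']
    cases j with
    | zero => exact verschiebung_coeff_zero _
    | succ k => rw [verschiebung_coeff_succ]; exact ih k (by omega)

theorem eq_iter_versch {x : WittVector p R} {n : ℕ} (hx : ∀ j < n, x.coeff j = 0) :
    x = verschiebung^[n] (WittVector.mk p fun i => x.coeff (i + n)) := by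
  ext j
  rcases lt_or_ge j n with hj | hj
  · rw [iter_versch_coeff_lt _ n j hj, hx j hj]
  · obtain ⟨k, rfl⟩ : ∃ k, j = k + n := ⟨j - n, by omega⟩
    rw [iterate_verschiebung_coeff, coeff_mk]

theorem add_coeff_of_lo_zero {x y : WittVector p R} {n : ℕ}
    (hx : ∀ j < n, x.coeff j = 0) (hy : ∀ j < n, y.coeff j = 0) :
    (x + y).coeff n = x.coeff n + y.coeff n := by
  rw [eq_iter_versch hx, eq_iter_versch hy,
    ← iterate_map_add (verschiebung : WittVector p R →+ WittVector p R) n]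
  have e : ∀ z : WittVector p R, ((⇑verschiebung)^[n] z).coeff n = z.coeff 0 := fun z => by
    simpa using iterate_verschiebung_coeff z n 0
  rw [e, e, e, add_coeff_zero, coeff_mk, coeff_mk]

/-- coefficient `n` only depends on the truncation at level `n+1`. -/
theorem coeff_eq_of_truncate_eq {x y : WittVector p R} {n : ℕ}
    (h : truncate (n + 1) x = truncate (n + 1) y) : x.coeff n = y.coeff n := by
  have hx := coeff_truncate x ⟨n, Nat.lt_succ_self n⟩
  have hy := coeff_truncate y ⟨n, Nat.lt_succ_self n⟩
  rw [← hx, ← hy, h]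

theorem coeff_eq_zero_of_truncate_zero {x : WittVector p R} {n : ℕ}
    (h : truncate n x = 0) {j : ℕ} (hj : j < n) : x.coeff j = 0 := by
  have hx := coeff_truncate x ⟨j, hj⟩
  rw [h] at hx
  simpa using hx.symm

theorem add_coeff_of_lo_zero' {x y : WittVector p R} {n : ℕ}
    (hy : ∀ j < n, y.coeff j = 0) :
    (x + y).coeff n = x.coeff n + y.coeff n := by
  set y' : WittVector p R := WittVector.mk p fun j => if j = n then y.coeff n else 0 with hy'
  have hty : truncate (n + 1) y = truncate (n + 1) y' := by
    ext ⟨j, hj⟩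
    rw [coeff_truncate, coeff_truncate, hy', coeff_mk]
    by_cases hjn : j = n
    · simp [hjn]
    · simp only [if_neg hjn]
      exact hy j (by omega)
  have key : (x + y).coeff n = (x + y').coeff n := by
    apply coeff_eq_of_truncate_eq
    rw [map_add, map_add, hty]
  have hy'lo : ∀ j < n, y'.coeff j = 0 := by
    intro j hj; rw [hy', coeff_mk, if_neg (by omega)]
  have hsplit : x + y' = init n x + (tail n x + y') := by
    rw [← add_assoc, init_add_tail]
  have htail_lo : ∀ j < n, (tail n x).coeff j = 0 := by
    intro j hj
    simp [tail, select, coeff_mk, hj]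
  have hd_lo : ∀ j < n, (tail n x + y').coeff j = 0 := by
    intro j hj
    rw [eq_iter_versch htail_lo, eq_iter_versch hy'lo,
      ← iterate_map_add (verschiebung : WittVector p R →+ WittVector p R) n]
    exact iter_versch_coeff_lt _ n j hj
  have hdisj : ∀ m, (init n x).coeff m = 0 ∨ (tail n x + y').coeff m = 0 := by
    intro m
    rcases lt_or_ge m n with hm | hm
    · exact Or.inr (hd_lo m hm)
    · left; simp [init, select, coeff_mk, not_lt.mpr hm]
  rw [key, hsplit, coeff_add_of_disjoint n _ _ hdisj,
    add_coeff_of_lo_zero htail_lo hy'lo]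
  have h1 : (init n x).coeff n = 0 := by simp [init, select, coeff_mk]
  have ht : (tail n x).coeff n = x.coeff n := by simp [tail, select, coeff_mk]
  have hyn : y'.coeff n = y.coeff n := by rw [hy', coeff_mk, if_pos rfl]
  rw [h1, ht, hyn, zero_add]

theorem map_frobenius' {S : Type*} [CommRing S] (g : R →+* S) (x : WittVector p R) :
    map g (frobenius x) = frobenius (map g x) := by
  ext k
  simp only [map_coeff, coeff_frobenius, MvPolynomial.map_aeval]
  apply MvPolynomial.eval₂Hom_congr (RingHom.ext_int _ _) _ rfl
  ext j
  simp [map_coeff]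

end WittVector

/-- The Frobenius operator `F` on the ring `W_n(R)` of `n`-truncated `p`-typical Witt
vectors over a ring `R` of characteristic `p`: it raises each coefficient to the `p`-th
power. -/
def TruncatedWittVector.frobenius (p n : ℕ) {R : Type*} [CommRing R]
    (x : TruncatedWittVector p n R) : TruncatedWittVector p n R :=
  TruncatedWittVector.mk p fun i => x.coeff i ^ p

/-- The polynomial `P_n ∈ ℤ[X_0, …, X_{n-1}, Y_0, …, Y_{n-1}]`, defined as the last
(`n`-th) coefficient of the `(n+1)`-truncated `p`-typical Witt vector
`F((X_0, …, X_{n-1}, 0)) - (X_0, …, X_{n-1}, 0) - (Y_0, …, Y_{n-1}, 0)` over the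
polynomial ring `ℤ[X_0, …, X_{n-1}, Y_0, …, Y_{n-1}]`. -/
noncomputable def wittP (p : ℕ) [Fact p.Prime] (n : ℕ) :
    MvPolynomial (Fin n ⊕ Fin n) ℤ :=
  let X : WittVector p (MvPolynomial (Fin n ⊕ Fin n) ℤ) :=
    WittVector.mk p fun i => if h : i < n then MvPolynomial.X (Sum.inl ⟨i, h⟩) else 0
  let Y : WittVector p (MvPolynomial (Fin n ⊕ Fin n) ℤ) :=
    WittVector.mk p fun i => if h : i < n then MvPolynomial.X (Sum.inr ⟨i, h⟩) else 0
  (WittVector.frobenius X - X - Y).coeff n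

/-- Let `p` be a prime, `n ≥ 0` and `A` a commutative ring of characteristic `p`.  For all
`r = (r_0, …, r_n), h = (h_0, …, h_n) ∈ W_{n+1}(A)`, the Witt vector
`℘(r) - (h_0, …, h_{n-1}, 0) ∈ W_{n+1}(A)` has truncation `℘(r_{<n}) - h_{<n} ∈ W_n(A)`
and last coefficient `r_n ^ p - r_n + P_n(r_0, …, r_{n-1}, h_0, …, h_{n-1})`. -/
theorem wittP_spec (p : ℕ) [Fact p.Prime] (n : ℕ)
    (A : Type*) [CommRing A] [CharP A p] (r h : WittVector p A) :
    (WittVector.truncate n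
        (WittVector.frobenius r - r -
          WittVector.mk p fun j => if j = n then 0 else h.coeff j) =
      TruncatedWittVector.frobenius p n (WittVector.truncate n r) -
        WittVector.truncate n r - WittVector.truncate n h) ∧
    ((WittVector.frobenius r - r -
        WittVector.mk p fun j => if j = n then 0 else h.coeff j).coeff n =
      r.coeff n ^ p - r.coeff n +
        MvPolynomial.aeval
          (Sum.elim (fun i : Fin n => r.coeff i) fun i : Fin n => h.coeff i)
          (wittP p n)) := by
  classical
  have hp0 : p ≠ 0 := (Fact.out : p.Prime).ne_zero
  set y : WittVector p A := WittVector.mk p fun j => if j = n then 0 else h.coeff j with hydef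
  constructor
  · -- first part
    have hF : WittVector.truncate n (WittVector.frobenius r) =
        TruncatedWittVector.frobenius p n (WittVector.truncate n r) := by
      ext i
      rw [WittVector.coeff_truncate, WittVector.coeff_frobenius_charP,
        TruncatedWittVector.frobenius, TruncatedWittVector.coeff_mk,
        WittVector.coeff_truncate]
    have hh : WittVector.truncate n y = WittVector.truncate n h := by
      ext ⟨j, hj⟩
      rw [WittVector.coeff_truncate, WittVector.coeff_truncate, hydef,
        WittVector.coeff_mk, if_neg (by omega)]
    rw [map_sub, map_sub, hF, hh]
  · -- second part
    set i : WittVector p A := WittVector.init n r with hidef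
    set t : WittVector p A := WittVector.tail n r with htdef
    have hsplit : WittVector.frobenius r - r - y =
        (WittVector.frobenius i - i - y) + (WittVector.frobenius t - t) := by
      conv_lhs => rw [← WittVector.init_add_tail r n]
      rw [map_add]
      ring
    -- t vanishes below n
    have htt : WittVector.truncate n t = 0 := by
      ext ⟨j, hj⟩
      simp [htdef, WittVector.coeff_truncate, WittVector.tail, WittVector.select,
        WittVector.coeff_mk, hj]
    have htail_lo : ∀ j < n, t.coeff j = 0 := fun j hj =>
      WittVector.coeff_eq_zero_of_truncate_zero htt hj
    have hFt_lo : ∀ j < n, (WittVector.frobenius t).coeff j = 0 := by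
      intro j hj
      rw [WittVector.coeff_frobenius_charP, htail_lo j hj, zero_pow hp0]
    have hnegt_lo : ∀ j < n, (-t).coeff j = 0 := fun j hj =>
      WittVector.coeff_eq_zero_of_truncate_zero (by rw [map_neg, htt, neg_zero]) hj
    have ha_lo : ∀ j < n, (WittVector.frobenius t - t).coeff j = 0 := by
      intro j hj
      apply WittVector.coeff_eq_zero_of_truncate_zero (n := n) _ hj
      have : WittVector.truncate n (WittVector.frobenius t) = 0 := by
        ext ⟨k, hk⟩
        rw [WittVector.coeff_truncate, hFt_lo k hk]
        simp
      rw [map_sub, this, htt, sub_zero]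
    have hnegtn : (-t).coeff n = -t.coeff n := by
      have h0 : (t + -t).coeff n = t.coeff n + (-t).coeff n :=
        WittVector.add_coeff_of_lo_zero htail_lo hnegt_lo
      rw [add_neg_cancel, WittVector.zero_coeff] at h0
      exact eq_neg_of_add_eq_zero_right h0.symm
    have htn : t.coeff n = r.coeff n := by
      simp [htdef, WittVector.tail, WittVector.select, WittVector.coeff_mk]
    have hcn : (WittVector.frobenius t - t).coeff n = r.coeff n ^ p - r.coeff n := by
      rw [sub_eq_add_neg, WittVector.add_coeff_of_lo_zero hFt_lo hnegt_lo,
        WittVector.coeff_frobenius_charP, hnegtn, htn, sub_eq_add_neg]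
    have key1 : (WittVector.frobenius r - r - y).coeff n =
        (WittVector.frobenius i - i - y).coeff n + (r.coeff n ^ p - r.coeff n) := by
      rw [hsplit, WittVector.add_coeff_of_lo_zero' ha_lo, hcn]
    -- the aeval part
    set σ : Fin n ⊕ Fin n → A :=
      Sum.elim (fun i : Fin n => r.coeff i) fun i : Fin n => h.coeff i with hσ
    set φ : MvPolynomial (Fin n ⊕ Fin n) ℤ →+* A := (MvPolynomial.aeval σ).toRingHom with hφ
    set X : WittVector p (MvPolynomial (Fin n ⊕ Fin n) ℤ) :=
      WittVector.mk p fun i => if h : i < n then MvPolynomial.X (Sum.inl ⟨i, h⟩) else 0 with hX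
    set Y : WittVector p (MvPolynomial (Fin n ⊕ Fin n) ℤ) :=
      WittVector.mk p fun i => if h : i < n then MvPolynomial.X (Sum.inr ⟨i, h⟩) else 0 with hY
    have hwp : wittP p n = (WittVector.frobenius X - X - Y).coeff n := rfl
    have hmapX : WittVector.map φ X = i := by
      ext j
      rw [WittVector.map_coeff, hX, WittVector.coeff_mk]
      by_cases hj : j < n
      · rw [dif_pos hj]
        simp [hφ, hσ, hidef, WittVector.init, WittVector.select, WittVector.coeff_mk, hj]
      · rw [dif_neg hj]
        simp [hidef, WittVector.init, WittVector.select, WittVector.coeff_mk, hj]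
    have haev : MvPolynomial.aeval σ (wittP p n) =
        (WittVector.frobenius i - i - WittVector.map φ Y).coeff n := by
      show φ (wittP p n) = _
      rw [hwp, ← WittVector.map_coeff, map_sub, map_sub, WittVector.map_frobenius', hmapX]
    have hYy : (WittVector.frobenius i - i - WittVector.map φ Y).coeff n =
        (WittVector.frobenius i - i - y).coeff n := by
      apply WittVector.coeff_eq_of_truncate_eq
      simp only [map_sub]
      have hYt : WittVector.truncate (n + 1) (WittVector.map φ Y) =
          WittVector.truncate (n + 1) y := by
        ext ⟨j, hj⟩
        rw [WittVector.coeff_truncate, WittVector.coeff_truncate, WittVector.map_coeff,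
          hY, WittVector.coeff_mk, hydef, WittVector.coeff_mk]
        simp only [Fin.val_mk]
        by_cases hjn : j < n
        · rw [dif_pos hjn, if_neg (by omega)]
          simp [hφ, hσ]
        · have : j = n := by omega
          rw [dif_neg hjn, if_pos this]
          simp
      rw [hYt]
    rw [key1, haev, hYy]
    ring
end
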